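/- For all u, u̇, w ∈ ℝ³ with u ≠ 0 and every scalar Ψ ∈ ℝ, the pair of conditions [𝓔(u, u̇, w) = 0 and w·u = ‖u‖²·Ψ] holds if and only if w = 3((u̇·u)/‖u‖²)·u̇ − 3((u̇·u)²/‖u‖⁴)·u − m·(u × u̇) + Ψ·u. (The variational equation supplemented by the condition ü·u = ‖u‖²Ψ is equivalent to an equation solved for the third derivative.) -/

import Mathlib

noncomputable section
open RealInnerProductSpace

/-- Three-dimensional Euclidean space. -/
abbrev E3 := EuclideanSpace ℝ (Fin 3)

/-- The cross product on ℝ³. -/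
def cross (a b : E3) : E3 :=
  (WithLp.equiv 2 (Fin 3 → ℝ)).symm
    ![a 1 * b 2 - a 2 * b 1, a 2 * b 0 - a 0 * b 2, a 0 * b 1 - a 1 * b 0]

/-- The Euler–Poisson expression
𝓔(u, u̇, ü) = (ü × u)/‖u‖³ − 3((u̇·u)/‖u‖⁵)(u̇ × u) + (m/‖u‖³)(‖u‖² u̇ − (u̇·u) u). -/
def EP (m : ℝ) (u du ddu : E3) : E3 :=
  (‖u‖ ^ 3)⁻¹ • cross ddu u - (3 * ⟪du, u⟫ / ‖u‖ ^ 5) • cross du u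
    + (m / ‖u‖ ^ 3) • (‖u‖ ^ 2 • du - ⟪du, u⟫ • u)

/-!
For `u ≠ 0` a vector `w` is determined by `w × u` and `w · u`, because
`u × (w × u) = ‖u‖² w − (w · u) u`. The equation `𝓔(u, u̇, w) = 0` prescribes `w × u`, the
supplementary condition prescribes `w · u`, and the explicit right-hand side has exactly these
two values.
-/

open Matrix WithLp

lemma cross_eq_toLp_crossProduct (a b : E3) : cross a b = toLp 2 (ofLp a ⨯₃ ofLp b) := by
  rw [cross, cross_apply]; rfl

lemma real_inner_eq_dotProduct (a b : E3) : ⟪a, b⟫ = ofLp a ⬝ᵥ ofLp b := by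
  rw [EuclideanSpace.inner_eq_star_dotProduct, star_trivial, dotProduct_comm]

lemma cross_add_left (a b c : E3) : cross (a + b) c = cross a c + cross b c := by
  simp [cross_eq_toLp_crossProduct]

lemma cross_sub_left (a b c : E3) : cross (a - b) c = cross a c - cross b c := by
  simp [cross_eq_toLp_crossProduct]

lemma cross_smul_left (r : ℝ) (a b : E3) : cross (r • a) b = r • cross a b := by
  simp [cross_eq_toLp_crossProduct]

lemma cross_self_eq_zero (a : E3) : cross a a = 0 := by
  simp [cross_eq_toLp_crossProduct]

lemma inner_cross_self_left (a b : E3) : ⟪cross a b, a⟫ = 0 := by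
  rw [real_inner_eq_dotProduct, cross_eq_toLp_crossProduct, ofLp_toLp, dotProduct_comm,
    dot_self_cross]

lemma cross_cross_self_right (a b : E3) : cross (cross a b) a = ‖a‖ ^ 2 • b - ⟪b, a⟫ • a := by
  rw [← real_inner_self_eq_norm_sq, real_inner_eq_dotProduct, real_inner_eq_dotProduct,
    cross_eq_toLp_crossProduct, cross_eq_toLp_crossProduct, ofLp_toLp,
    cross_cross_eq_smul_sub_smul]
  simp

lemma cross_self_cross (a b : E3) : cross a (cross b a) = ‖a‖ ^ 2 • b - ⟪b, a⟫ • a := by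
  rw [← real_inner_self_eq_norm_sq, real_inner_eq_dotProduct, real_inner_eq_dotProduct,
    cross_eq_toLp_crossProduct, cross_eq_toLp_crossProduct, ofLp_toLp,
    cross_cross_eq_smul_sub_smul']
  simp

lemma norm_sq_smul_eq_cross_self_cross_add (u w : E3) :
    ‖u‖ ^ 2 • w = cross u (cross w u) + ⟪w, u⟫ • u := by
  rw [cross_self_cross, sub_add_cancel]

lemma eq_of_cross_eq_of_inner_eq {u v w : E3} (hu : u ≠ 0) (hcross : cross v u = cross w u)
    (hinner : ⟪v, u⟫ = ⟪w, u⟫) : v = w := by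
  have hu2 : ‖u‖ ^ 2 ≠ 0 := by positivity
  refine smul_right_injective E3 hu2 ?_
  simp only [norm_sq_smul_eq_cross_self_cross_add u, hcross, hinner]

lemma EP_eq_zero_iff (m : ℝ) {u : E3} (hu : u ≠ 0) (du w : E3) :
    EP m u du w = 0 ↔
      cross w u = (3 * (⟪du, u⟫ / ‖u‖ ^ 2)) • cross du u - m • (‖u‖ ^ 2 • du - ⟪du, u⟫ • u) := by
  have hu3 : (‖u‖ ^ 3)⁻¹ ≠ 0 := by positivity
  have hEP : EP m u du w = (‖u‖ ^ 3)⁻¹ • (cross w u -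
      ((3 * (⟪du, u⟫ / ‖u‖ ^ 2)) • cross du u - m • (‖u‖ ^ 2 • du - ⟪du, u⟫ • u))) := by
    unfold EP
    match_scalars <;> field_simp
  rw [hEP, smul_eq_zero_iff_right hu3, sub_eq_zero]

/-- the variational equation 𝓔(u, u̇, w) = 0 supplemented by the
condition w·u = ‖u‖²Ψ is equivalent to an equation solved for the third derivative. -/
theorem EP_supplemented_solved_for_third_derivative (m : ℝ)
    (u du w : E3) (hu : u ≠ 0) (Ψ : ℝ) :
    (EP m u du w = 0 ∧ ⟪w, u⟫ = ‖u‖ ^ 2 * Ψ) ↔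
      w = (3 * (⟪du, u⟫ / ‖u‖ ^ 2)) • du - (3 * (⟪du, u⟫ ^ 2 / ‖u‖ ^ 4)) • u
            - m • cross u du + Ψ • u := by
  set v := (3 * (⟪du, u⟫ / ‖u‖ ^ 2)) • du - (3 * (⟪du, u⟫ ^ 2 / ‖u‖ ^ 4)) • u
            - m • cross u du + Ψ • u
  have hv_cross : cross v u =
      (3 * (⟪du, u⟫ / ‖u‖ ^ 2)) • cross du u - m • (‖u‖ ^ 2 • du - ⟪du, u⟫ • u) := by
    simp only [v, cross_add_left, cross_sub_left, cross_smul_left, cross_self_eq_zero,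
      cross_cross_self_right]
    module
  have hv_inner : ⟪v, u⟫ = ‖u‖ ^ 2 * Ψ := by
    simp only [v, inner_add_left, inner_sub_left, real_inner_smul_left, inner_cross_self_left,
      real_inner_self_eq_norm_sq]
    field_simp
    ring
  rw [EP_eq_zero_iff m hu, ← hv_cross, ← hv_inner]
  constructor
  · rintro ⟨hcross, hinner⟩
    exact eq_of_cross_eq_of_inner_eq hu hcross hinner
  · rintro rfl
    exact ⟨rfl, rfl⟩
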